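/- For the Chebyshev-Dickson polynomials T_n over 𝔽₂, gcd(T_m, T_n) = T_{gcd(m,n)} for all m, n ≥ 1. -/

import Mathlib

/-!
Write `T_n = X * F_n`, where `F` is the sequence of Fibonacci polynomials. The addition formula
`F (m + n + 1) = F m * F n + F (m + 1) * F (n + 1)` and the coprimality of consecutive terms show
that `F m` and `F (n + m)` have the same common divisors as `F m` and `F n`, so Euclid's algorithm
on the indices makes the common divisors of `F m` and `F n` exactly the divisors of
`F (gcd m n)`; this holds over any commutative ring. Hence `gcd (T m) (T n)` is associated to
`X * F (gcd m n) = T (gcd m n)`, and over `𝔽₂` the only unit of `𝔽₂[X]` is `1`.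
-/

open Polynomial

/-- The Chebyshev-Dickson polynomials of the first kind over 𝔽₂. -/
noncomputable def Cheb2 : ℕ → Polynomial (ZMod 2)
  | 0 => 0
  | 1 => X
  | n + 2 => X * Cheb2 (n + 1) + Cheb2 n

/-- `fibSeq 1` is the image of `Nat.fib`, and `fibSeq X` is the sequence of Fibonacci
polynomials. -/
def fibSeq {R : Type*} [CommRing R] (a : R) : ℕ → R
  | 0 => 0
  | 1 => 1
  | n + 2 => a * fibSeq a (n + 1) + fibSeq a n

section fibSeq

variable {R : Type*} [CommRing R] (a : R)

@[simp] lemma fibSeq_zero : fibSeq a 0 = 0 := rfl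

@[simp] lemma fibSeq_one : fibSeq a 1 = 1 := rfl

lemma fibSeq_add_two (n : ℕ) : fibSeq a (n + 2) = a * fibSeq a (n + 1) + fibSeq a n := rfl

lemma fibSeq_add (m n : ℕ) :
    fibSeq a (m + n + 1) = fibSeq a m * fibSeq a n + fibSeq a (m + 1) * fibSeq a (n + 1) := by
  induction m using Nat.twoStepInduction with
  | zero => simp
  | one => rw [add_comm 1 n, fibSeq_add_two, fibSeq_add_two a 0]; simp [add_comm]
  | more m ih₁ ih₂ =>
    rw [show m + 2 + n + 1 = m + n + 1 + 2 by ring, fibSeq_add_two,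
      show m + n + 1 + 1 = m + 1 + n + 1 by ring, ih₁, ih₂, fibSeq_add_two a (m + 1),
      fibSeq_add_two a m]
    ring

lemma isCoprime_fibSeq_succ (n : ℕ) : IsCoprime (fibSeq a n) (fibSeq a (n + 1)) := by
  induction n with
  | zero => exact isCoprime_one_right
  | succ n ih =>
    rw [fibSeq_add_two]
    exact ih.symm.mul_add_right_right a

variable {a} {d : R} {m : ℕ}

lemma dvd_fibSeq_add_iff (hm : d ∣ fibSeq a m) (n : ℕ) :
    d ∣ fibSeq a (n + m) ↔ d ∣ fibSeq a n := by
  rcases n with _ | n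
  · simpa using hm
  have hcop : IsCoprime d (fibSeq a (m + 1)) :=
    (isCoprime_fibSeq_succ a m).of_isCoprime_of_dvd_left hm
  rw [show n + 1 + m = m + n + 1 by ring, fibSeq_add, dvd_add_right (hm.mul_right _)]
  exact ⟨hcop.dvd_of_dvd_mul_left, fun h => h.mul_left _⟩

lemma dvd_fibSeq_add_mul_iff (hm : d ∣ fibSeq a m) (n k : ℕ) :
    d ∣ fibSeq a (n + m * k) ↔ d ∣ fibSeq a n := by
  induction k with
  | zero => simp
  | succ k ih => rw [mul_add_one, ← add_assoc, dvd_fibSeq_add_iff hm, ih]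

lemma dvd_fibSeq_gcd_iff (m n : ℕ) :
    d ∣ fibSeq a (m.gcd n) ↔ d ∣ fibSeq a m ∧ d ∣ fibSeq a n := by
  induction m, n using Nat.gcd.induction with
  | H0 n => simp
  | H1 m n _ ih =>
    rw [Nat.gcd_rec, ih, and_comm, and_congr_right_iff]
    intro hm
    rw [← dvd_fibSeq_add_mul_iff hm _ (n / m), Nat.mod_add_div]

end fibSeq

namespace EuclideanDomain

variable {R : Type*} [EuclideanDomain R] [DecidableEq R]

lemma associated_gcd_of_forall_dvd_iff {a b d : R} (h : ∀ e, e ∣ d ↔ e ∣ a ∧ e ∣ b) :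
    Associated (gcd a b) d :=
  associated_of_dvd_dvd ((h _).2 ⟨gcd_dvd_left a b, gcd_dvd_right a b⟩)
    (dvd_gcd ((h d).1 dvd_rfl).1 ((h d).1 dvd_rfl).2)

lemma gcd_mul_left_associated (c a b : R) :
    Associated (gcd (c * a) (c * b)) (c * gcd a b) := by
  refine associated_of_dvd_dvd ?_
    (dvd_gcd (mul_dvd_mul_left c (gcd_dvd_left a b)) (mul_dvd_mul_left c (gcd_dvd_right a b)))
  rw [gcd_eq_gcd_ab a b, mul_add, ← mul_assoc, ← mul_assoc]
  exact dvd_add ((gcd_dvd_left _ _).mul_right _) ((gcd_dvd_right _ _).mul_right _)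

end EuclideanDomain

instance Polynomial.subsingleton_units {R : Type*} [Semiring R] [NoZeroDivisors R]
    [Subsingleton Rˣ] : Subsingleton R[X]ˣ := by
  refine ⟨fun u v => Units.ext ?_⟩
  obtain ⟨r, hr, hu⟩ := isUnit_iff.mp u.isUnit
  obtain ⟨s, hs, hv⟩ := isUnit_iff.mp v.isUnit
  rw [← hu, ← hv, isUnit_iff_eq_one.mp hr, isUnit_iff_eq_one.mp hs]

lemma cheb2_eq_X_mul_fibSeq (n : ℕ) : Cheb2 n = X * fibSeq X n := by
  induction n using Nat.twoStepInduction with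
  | zero => simp [Cheb2]
  | one => simp [Cheb2]
  | more n ih₁ ih₂ =>
    rw [Cheb2, fibSeq_add_two, ih₁, ih₂]
    ring

theorem cheb2_gcd_general (m n : ℕ) :
    EuclideanDomain.gcd (Cheb2 m) (Cheb2 n) = Cheb2 (Nat.gcd m n) := by
  simp only [cheb2_eq_X_mul_fibSeq]
  rw [← associated_iff_eq]
  refine (EuclideanDomain.gcd_mul_left_associated _ _ _).trans (Associated.mul_left X ?_)
  exact EuclideanDomain.associated_gcd_of_forall_dvd_iff fun _ => dvd_fibSeq_gcd_iff m n

theorem cheb2_gcd (m n : ℕ) (hm : 1 ≤ m) (hn : 1 ≤ n) :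
    EuclideanDomain.gcd (Cheb2 m) (Cheb2 n) = Cheb2 (Nat.gcd m n) :=
  cheb2_gcd_general m n
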